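/- arXiv:2102.05332 — 2 statements merged into one kernel-verified Lean document; each statement's English description precedes it below -/
import Mathlib

section
/- Let γ > 0, μ > 0, and let C₀, C_{γ,0}, C_{μ,0} > 0 and 0 < T_f < ∞ be given. Then there exists a constant C̃ = C̃(γ, μ, C₀, C_{γ,0}, C_{μ,0}, T_f) > 0 with the following property: for every 0 < ε < 1, if φ : [0, T_f] → ℓ² is a solution of the cubic DNLS equation and ψ : [0, T_f] → ℓ² is a solution of the AL lattice whose initial data satisfy ‖φ(0) − ψ(0)‖_{ℓ²} ≤ C₀ ε³, ‖φ(0)‖_{ℓ²} ≤ C_{γ,0} ε, and P_μ(ψ(0)) ≤ C_{μ,0} ε², then the maximal distance between individual units satisfies ‖φ(t) − ψ(t)‖_{ℓ∞} = sup_{n∈ℤ} |φ_n(t) − ψ_n(t)| ≤ C̃ ε³ for every t ∈ [0, T_f]. -/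
/-!
Both lattices are perturbations of the linear flow `u̇ = i (uₙ₊₁ + uₙ₋₁)`, which is Lipschitz on
`ℓ²` with constant 2. The DNLS flow conserves `‖φ‖²` and the AL flow conserves `P_μ(ψ)`, and
`μ ‖ψ‖² ≤ P_μ(ψ) e^{P_μ(ψ)}`; so both solutions stay of size `O(ε)` in `ℓ²` on `[0, T_f]`, their
nonlinear terms are `O(ε³)`, and Grönwall's inequality for approximate trajectories of the linear
flow keeps `‖φ(t) − ψ(t)‖_{ℓ²} ≤ C̃ ε³`. The `ℓ∞` norm is at most the `ℓ²` norm.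

Both conservation laws are local: the densities `|φₙ|²` and `ln(1 + μ|ψₙ|²)` change at a rate
proportional to `Jₙ − Jₙ₋₁`, with current `Jₙ = Re(i φ̄ₙ φₙ₊₁)`. Summing over `n` exchanges a
series with a time derivative; this is done in integrated form, by dominated convergence, using
that `∑ₙ |Jₙ − Jₙ₋₁| ≤ 2 ‖φ‖²` stays bounded on the compact time interval.
-/

open Set

noncomputable section

/-- The Hilbert space ℓ² of square-summable sequences of complex numbers indexed by ℤ. -/
abbrev l2 : Type := lp (fun _ : ℤ => ℂ) 2

/-- `φ : I → ℓ²` is a solution of the cubic DNLS equation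
`i φ̇ₙ + (φₙ₊₁ + φₙ₋₁) + γ|φₙ|²φₙ = 0` on the set `s`, with derivative curve `φ'`:
it is continuously differentiable and satisfies the equation componentwise. -/
def IsDNLSSol (γ : ℝ) (s : Set ℝ) (φ φ' : ℝ → l2) : Prop :=
  (∀ t ∈ s, HasDerivWithinAt φ (φ' t) s t) ∧ ContinuousOn φ' s ∧
    ∀ t ∈ s, ∀ n : ℤ,
      Complex.I * (φ' t) n + ((φ t) (n + 1) + (φ t) (n - 1))
        + (γ * ‖(φ t) n‖ ^ 2 : ℝ) * (φ t) n = 0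

/-- `ψ : I → ℓ²` is a solution of the Ablowitz–Ladik lattice
`i ψ̇ₙ + (ψₙ₊₁ + ψₙ₋₁) + μ|ψₙ|²(ψₙ₊₁ + ψₙ₋₁) = 0` on the set `s`, with derivative curve `ψ'`:
it is continuously differentiable and satisfies the equation componentwise. -/
def IsALSol (μ : ℝ) (s : Set ℝ) (ψ ψ' : ℝ → l2) : Prop :=
  (∀ t ∈ s, HasDerivWithinAt ψ (ψ' t) s t) ∧ ContinuousOn ψ' s ∧
    ∀ t ∈ s, ∀ n : ℤ,
      Complex.I * (ψ' t) n + ((ψ t) (n + 1) + (ψ t) (n - 1))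
        + (μ * ‖(ψ t) n‖ ^ 2 : ℝ) * ((ψ t) (n + 1) + (ψ t) (n - 1)) = 0

/-- The deformed power `P_μ(ψ) = Σₙ ln(1 + μ|ψₙ|²)`. -/
def Pdef (μ : ℝ) (ψ : l2) : ℝ := ∑' n : ℤ, Real.log (1 + μ * ‖ψ n‖ ^ 2)

open Complex ComplexConjugate Filter Topology MeasureTheory Interval

namespace lp

variable {α : Type*} {E : α → Type*} [∀ i, NormedAddCommGroup (E i)] {p : ENNReal}

theorem iSup_norm_apply_le_norm [Nonempty α] (hp : p ≠ 0) (f : lp E p) : ⨆ i, ‖f i‖ ≤ ‖f‖ :=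
  ciSup_le fun i => norm_apply_le_norm hp f i

theorem norm_le_mul_norm_of_forall_norm_apply_le [∀ i, NormedSpace ℝ (E i)] [Fact (1 ≤ p)]
    {c : ℝ} (hc : 0 ≤ c) {f g : lp E p} (h : ∀ i, ‖f i‖ ≤ c * ‖g i‖) : ‖f‖ ≤ c * ‖g‖ := by
  have hp : p ≠ 0 := (zero_lt_one.trans_le Fact.out).ne'
  calc ‖f‖ ≤ ‖c • g‖ := norm_mono hp fun i => by simpa [norm_smul, abs_of_nonneg hc] using h i
    _ = c * ‖g‖ := by rw [norm_smul, Real.norm_of_nonneg hc]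

theorem hasDerivWithinAt_apply [∀ i, NormedSpace ℝ (E i)] [Fact (1 ≤ p)] {f : ℝ → lp E p}
    {f' : lp E p} {s : Set ℝ} {t : ℝ} (h : HasDerivWithinAt f f' s t) (i : α) :
    HasDerivWithinAt (fun u => f u i) (f' i) s t :=
  (evalCLM ℝ E p i).hasFDerivAt.comp_hasDerivWithinAt t h

end lp

namespace l2

theorem hasSum_norm_sq (x : l2) : HasSum (fun n => ‖x n‖ ^ 2) (‖x‖ ^ 2) := by
  simpa using lp.hasSum_norm (p := 2) (by norm_num) x

theorem hasSum_norm_sq_comp_add (x : l2) (k : ℤ) :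
    HasSum (fun n => ‖x (n + k)‖ ^ 2) (‖x‖ ^ 2) :=
  (Equiv.addRight k).hasSum_iff.2 (hasSum_norm_sq x)

def shift (k : ℤ) : l2 →ₗ[ℂ] l2 where
  toFun x :=
    ⟨fun n => x (n + k), memℓp_gen (by simpa using (hasSum_norm_sq_comp_add x k).summable)⟩
  map_add' _ _ := rfl
  map_smul' _ _ := rfl

@[simp] theorem shift_apply (k : ℤ) (x : l2) (n : ℤ) : shift k x n = x (n + k) := rfl

theorem norm_shift (k : ℤ) (x : l2) : ‖shift k x‖ = ‖x‖ :=
  (pow_left_inj₀ (norm_nonneg _) (norm_nonneg _) two_ne_zero).1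
    ((hasSum_norm_sq (shift k x)).unique (hasSum_norm_sq_comp_add x k))

def hopping : l2 →ₗ[ℂ] l2 := shift 1 + shift (-1)

@[simp] theorem hopping_apply (x : l2) (n : ℤ) : hopping x n = x (n + 1) + x (n - 1) := by
  simp [hopping, sub_eq_add_neg]

theorem norm_hopping_le (x : l2) : ‖hopping x‖ ≤ 2 * ‖x‖ := by
  calc ‖hopping x‖ ≤ ‖shift 1 x‖ + ‖shift (-1) x‖ := norm_add_le _ _
    _ = 2 * ‖x‖ := by rw [norm_shift, norm_shift]; ring

theorem lipschitzWith_I_smul_hopping : LipschitzWith 2 fun x : l2 => I • hopping x :=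
  LipschitzWith.of_dist_le_mul fun x y => by
    rw [dist_eq_norm, dist_eq_norm, ← smul_sub, ← map_sub, norm_smul, norm_I, one_mul]
    exact_mod_cast norm_hopping_le (x - y)

theorem norm_sub_I_smul_hopping_le_of_dnls {γ : ℝ} (hγ : 0 ≤ γ) {x x' : l2}
    (h : ∀ n : ℤ, I * x' n + (x (n + 1) + x (n - 1)) + (γ * ‖x n‖ ^ 2 : ℝ) * x n = 0) :
    ‖x' - I • hopping x‖ ≤ γ * ‖x‖ ^ 3 := by
  calc ‖x' - I • hopping x‖ ≤ γ * ‖x‖ ^ 2 * ‖x‖ := by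
        refine lp.norm_le_mul_norm_of_forall_norm_apply_le (by positivity) fun n => ?_
        have hn : (x' - I • hopping x) n = I * ((γ * ‖x n‖ ^ 2 : ℝ) * x n) := by
          simp only [lp.coeFn_sub, lp.coeFn_smul, Pi.sub_apply, Pi.smul_apply, hopping_apply,
            smul_eq_mul]
          linear_combination (-I) * h n + x' n * I_sq
        rw [hn, norm_mul, norm_I, one_mul, norm_mul, norm_real, Real.norm_of_nonneg (by positivity)]
        gcongr
        exact lp.norm_apply_le_norm two_ne_zero x n
    _ = γ * ‖x‖ ^ 3 := by ring

theorem norm_sub_I_smul_hopping_le_of_al {μ : ℝ} (hμ : 0 ≤ μ) {x x' : l2}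
    (h : ∀ n : ℤ, I * x' n + (x (n + 1) + x (n - 1))
      + (μ * ‖x n‖ ^ 2 : ℝ) * (x (n + 1) + x (n - 1)) = 0) :
    ‖x' - I • hopping x‖ ≤ 2 * μ * ‖x‖ ^ 3 := by
  calc ‖x' - I • hopping x‖ ≤ μ * ‖x‖ ^ 2 * ‖hopping x‖ := by
        refine lp.norm_le_mul_norm_of_forall_norm_apply_le (by positivity) fun n => ?_
        have hn : (x' - I • hopping x) n = I * ((μ * ‖x n‖ ^ 2 : ℝ) * hopping x n) := by
          simp only [lp.coeFn_sub, lp.coeFn_smul, Pi.sub_apply, Pi.smul_apply, hopping_apply,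
            smul_eq_mul]
          linear_combination (-I) * h n + x' n * I_sq
        rw [hn, norm_mul, norm_I, one_mul, norm_mul, norm_real, Real.norm_of_nonneg (by positivity)]
        gcongr
        exact lp.norm_apply_le_norm two_ne_zero x n
    _ ≤ μ * ‖x‖ ^ 2 * (2 * ‖x‖) := by gcongr; exact norm_hopping_le x
    _ = 2 * μ * ‖x‖ ^ 3 := by ring


end l2

theorem tsum_sub_tsum_eq_integral_of_hasDerivWithinAt {ι : Type*} [Countable ι]
    {g g' : ι → ℝ → ℝ} {G : ℝ → ℝ} {a b M : ℝ}
    (hg : ∀ i, ∀ s ∈ Icc a b, HasDerivWithinAt (g i) (g' i s) (Icc a b) s)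
    (hg' : ∀ i, ContinuousOn (g' i) (Icc a b))
    (hG : ∀ s ∈ Icc a b, HasSum (fun i => g' i s) (G s))
    (hM : ∀ s ∈ Icc a b, ∀ F : Finset ι, ‖∑ i ∈ F, g' i s‖ ≤ M)
    (hsum : ∀ s ∈ Icc a b, Summable fun i => g i s) {t : ℝ} (ht : t ∈ Icc a b) :
    ∑' i, g i t - ∑' i, g i a = ∫ s in a..t, G s := by
  have ha : a ∈ Icc a b := ⟨le_rfl, ht.1.trans ht.2⟩
  have hIcc : Icc a t ⊆ Icc a b := Icc_subset_Icc_right ht.2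
  have hIoc : Ι a t ⊆ Icc a b := by
    rw [uIoc_of_le ht.1]
    exact Ioc_subset_Icc_self.trans hIcc
  have hcont (F : Finset ι) : ContinuousOn (fun s => ∑ i ∈ F, g' i s) (Icc a b) :=
    continuousOn_finsetSum F fun i _ => hg' i
  have partial_sums (F : Finset ι) :
      ∑ i ∈ F, (g i t - g i a) = ∫ s in a..t, ∑ i ∈ F, g' i s := by
    have hderiv (s : ℝ) (hs : s ∈ Icc a b) :
        HasDerivWithinAt (fun u => ∑ i ∈ F, g i u) (∑ i ∈ F, g' i s) (Icc a b) s :=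
      HasDerivWithinAt.fun_sum fun i _ => hg i s hs
    rw [Finset.sum_sub_distrib, intervalIntegral.integral_eq_sub_of_hasDerivAt_of_le ht.1
      (fun s hs => (hderiv s (hIcc hs)).continuousWithinAt.mono hIcc)
      (fun s hs => (hderiv s (hIcc (Ioo_subset_Icc_self hs))).hasDerivAt
        (Icc_mem_nhds hs.1 (hs.2.trans_le ht.2)))
      (((hcont F).mono (uIcc_of_le ht.1 ▸ hIcc)).intervalIntegrable)]
  have lhs : Tendsto (fun F : Finset ι => ∑ i ∈ F, (g i t - g i a)) atTop
      (𝓝 (∑' i, g i t - ∑' i, g i a)) :=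
    (hsum t ht).hasSum.sub (hsum a ha).hasSum
  have rhs : Tendsto (fun F : Finset ι => ∫ s in a..t, ∑ i ∈ F, g' i s) atTop
      (𝓝 (∫ s in a..t, G s)) :=
    intervalIntegral.tendsto_integral_filter_of_dominated_convergence (fun _ => M)
      (Eventually.of_forall fun F =>
        ((hcont F).mono hIoc).aestronglyMeasurable measurableSet_uIoc)
      (Eventually.of_forall fun F => ae_of_all _ fun s hs => hM s (hIoc hs) F)
      intervalIntegrable_const (ae_of_all _ fun s hs => hG s (hIoc hs))
  exact tendsto_nhds_unique lhs (rhs.congr fun F => (partial_sums F).symm)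

namespace l2

def flux (x : l2) (n : ℤ) : ℝ := (I * conj (x n) * x (n + 1)).re

theorem continuous_flux (n : ℤ) : Continuous fun x : l2 => flux x n := by
  have hev (m : ℤ) : Continuous fun x : l2 => x m := (lp.evalCLM ℂ (fun _ : ℤ => ℂ) 2 m).continuous
  exact continuous_re.comp ((continuous_const.mul (continuous_conj.comp (hev n))).mul (hev (n + 1)))

theorem abs_flux_le (x : l2) (n : ℤ) : |flux x n| ≤ (‖x n‖ ^ 2 + ‖x (n + 1)‖ ^ 2) / 2 :=
  calc |flux x n| ≤ ‖I * conj (x n) * x (n + 1)‖ := abs_re_le_norm _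
    _ = ‖x n‖ * ‖x (n + 1)‖ := by simp
    _ ≤ _ := by nlinarith [sq_nonneg (‖x n‖ - ‖x (n + 1)‖)]

theorem hasSum_norm_sq_add_norm_sq_div_two (x : l2) :
    HasSum (fun n => (‖x n‖ ^ 2 + ‖x (n + 1)‖ ^ 2) / 2) (‖x‖ ^ 2) := by
  simpa using ((hasSum_norm_sq x).add (hasSum_norm_sq_comp_add x 1)).div_const 2

theorem summable_abs_flux (x : l2) : Summable fun n => |flux x n| :=
  (hasSum_norm_sq_add_norm_sq_div_two x).summable.of_nonneg_of_le (fun _ => abs_nonneg _)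
    (abs_flux_le x)

theorem hasSum_flux_sub_flux (x : l2) : HasSum (fun n => flux x n - flux x (n - 1)) 0 := by
  have h := (summable_abs_flux x).of_abs.hasSum
  simpa using h.sub ((Equiv.subRight (1 : ℤ)).hasSum_iff.2 h)

theorem sum_abs_flux_sub_flux_le (x : l2) (F : Finset ℤ) :
    ∑ n ∈ F, |flux x n - flux x (n - 1)| ≤ 2 * ‖x‖ ^ 2 := by
  have h := summable_abs_flux x
  have h' : Summable fun n => |flux x (n - 1)| := (Equiv.subRight (1 : ℤ)).summable_iff.2 h
  calc ∑ n ∈ F, |flux x n - flux x (n - 1)| ≤ ∑ n ∈ F, (|flux x n| + |flux x (n - 1)|) :=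
        Finset.sum_le_sum fun n _ => abs_sub _ _
    _ ≤ ∑' n, (|flux x n| + |flux x (n - 1)|) :=
        (h.add h').sum_le_tsum _ fun _ _ => add_nonneg (abs_nonneg _) (abs_nonneg _)
    _ = 2 * ∑' n, |flux x n| := by
        have hshift : ∑' n, |flux x (n - 1)| = ∑' n, |flux x n| :=
          (Equiv.subRight (1 : ℤ)).tsum_eq fun n => |flux x n|
        rw [h.tsum_add h', hshift, two_mul]
    _ ≤ 2 * ‖x‖ ^ 2 := by
        gcongr
        exact hasSum_le (abs_flux_le x) h.hasSum (hasSum_norm_sq_add_norm_sq_div_two x)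

theorem inner_apply_eq_mul_flux_sub_flux {x x' : l2} {n : ℤ} {k r : ℝ}
    (h : I * x' n + k * (x (n + 1) + x (n - 1)) + r * x n = 0) :
    inner ℝ (x n) (x' n) = k * (flux x n - flux x (n - 1)) := by
  have hx' : x' n = I * (k * (x (n + 1) + x (n - 1)) + r * x n) := by
    linear_combination (-I) * h + x' n * I_sq
  rw [flux, flux, sub_add_cancel, Complex.inner, hx']
  simp only [mul_re, mul_im, add_re, add_im, I_re, I_im, conj_re, conj_im, ofReal_re, ofReal_im]
  ring

theorem tsum_eq_of_hasDerivWithinAt_flux {ψ : ℝ → l2} {g : ℤ → ℝ → ℝ} {a b c : ℝ}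
    (hψ : ContinuousOn ψ (Icc a b))
    (hg : ∀ n, ∀ s ∈ Icc a b,
      HasDerivWithinAt (g n) (c * (flux (ψ s) n - flux (ψ s) (n - 1))) (Icc a b) s)
    (hsum : ∀ s ∈ Icc a b, Summable fun n => g n s) {t : ℝ} (ht : t ∈ Icc a b) :
    ∑' n, g n t = ∑' n, g n a := by
  obtain ⟨C, hC⟩ := isCompact_Icc.exists_bound_of_continuousOn hψ
  have hflux (n : ℤ) : ContinuousOn (fun s => flux (ψ s) n) (Icc a b) :=
    (continuous_flux n).comp_continuousOn hψ
  refine sub_eq_zero.1 <| (tsum_sub_tsum_eq_integral_of_hasDerivWithinAt (G := fun _ => 0)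
    (M := |c| * (2 * C ^ 2)) hg
    (fun n => continuousOn_const.mul ((hflux n).sub (hflux (n - 1))))
    (fun s _ => by simpa using (hasSum_flux_sub_flux (ψ s)).mul_left c) (fun s hs F => ?_)
    hsum ht).trans intervalIntegral.integral_zero
  calc ‖∑ n ∈ F, c * (flux (ψ s) n - flux (ψ s) (n - 1))‖
      ≤ ∑ n ∈ F, ‖c * (flux (ψ s) n - flux (ψ s) (n - 1))‖ := norm_sum_le _ _
    _ = |c| * ∑ n ∈ F, |flux (ψ s) n - flux (ψ s) (n - 1)| := by
        simp [Finset.mul_sum]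
    _ ≤ |c| * (2 * ‖ψ s‖ ^ 2) := by gcongr; exact sum_abs_flux_sub_flux_le _ F
    _ ≤ |c| * (2 * C ^ 2) := by gcongr; exact hC s hs

end l2

theorem IsDNLSSol.norm_eq {γ a b : ℝ} {φ φ' : ℝ → l2} (h : IsDNLSSol γ (Icc a b) φ φ') {t : ℝ}
    (ht : t ∈ Icc a b) : ‖φ t‖ = ‖φ a‖ := by
  obtain ⟨hd, -, heq⟩ := h
  have hderiv (n : ℤ) (s : ℝ) (hs : s ∈ Icc a b) : HasDerivWithinAt (fun u => ‖φ u n‖ ^ 2)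
      (2 * (l2.flux (φ s) n - l2.flux (φ s) (n - 1))) (Icc a b) s := by
    have hn := (lp.hasDerivWithinAt_apply (hd s hs) n).norm_sq
    rwa [l2.inner_apply_eq_mul_flux_sub_flux (k := 1) (r := γ * ‖φ s n‖ ^ 2)
      (by simpa using heq s hs n), one_mul] at hn
  have hsq := l2.tsum_eq_of_hasDerivWithinAt_flux (fun s hs => (hd s hs).continuousWithinAt)
    hderiv (fun s _ => (l2.hasSum_norm_sq (φ s)).summable) ht
  rw [(l2.hasSum_norm_sq _).tsum_eq, (l2.hasSum_norm_sq _).tsum_eq] at hsq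
  exact (pow_left_inj₀ (norm_nonneg _) (norm_nonneg _) two_ne_zero).1 hsq

theorem summable_log_one_add_mul_norm_sq {μ : ℝ} (hμ : 0 ≤ μ) (x : l2) :
    Summable fun n => Real.log (1 + μ * ‖x n‖ ^ 2) :=
  ((l2.hasSum_norm_sq x).summable.mul_left μ).of_nonneg_of_le
    (fun n => Real.log_nonneg (le_add_of_nonneg_right (by positivity)))
    (fun n => (Real.log_le_sub_one_of_pos (by positivity)).trans_eq (by ring))

theorem IsALSol.Pdef_eq {μ a b : ℝ} (hμ : 0 ≤ μ) {ψ ψ' : ℝ → l2} (h : IsALSol μ (Icc a b) ψ ψ')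
    {t : ℝ} (ht : t ∈ Icc a b) : Pdef μ (ψ t) = Pdef μ (ψ a) := by
  obtain ⟨hd, -, heq⟩ := h
  have hderiv (n : ℤ) (s : ℝ) (hs : s ∈ Icc a b) :
      HasDerivWithinAt (fun u => Real.log (1 + μ * ‖ψ u n‖ ^ 2))
        (2 * μ * (l2.flux (ψ s) n - l2.flux (ψ s) (n - 1))) (Icc a b) s := by
    have hpos : 0 < 1 + μ * ‖ψ s n‖ ^ 2 := by positivity
    have hn := ((((lp.hasDerivWithinAt_apply (hd s hs) n).norm_sq).const_mul μ).const_add 1).log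
      hpos.ne'
    rw [l2.inner_apply_eq_mul_flux_sub_flux (k := 1 + μ * ‖ψ s n‖ ^ 2) (r := 0)
      (by have := heq s hs n; push_cast at this ⊢; linear_combination this)] at hn
    convert hn using 1
    field_simp
  exact l2.tsum_eq_of_hasDerivWithinAt_flux (fun s hs => (hd s hs).continuousWithinAt) hderiv
    (fun s _ => summable_log_one_add_mul_norm_sq hμ (ψ s)) ht

theorem mul_norm_sq_le_Pdef_mul_exp {μ : ℝ} (hμ : 0 ≤ μ) (x : l2) :
    μ * ‖x‖ ^ 2 ≤ Pdef μ x * Real.exp (Pdef μ x) := by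
  have hsum := summable_log_one_add_mul_norm_sq hμ x
  refine hasSum_le (fun n => ?_) ((l2.hasSum_norm_sq x).mul_left μ)
    (hsum.hasSum.mul_right (Real.exp (Pdef μ x)))
  set u := μ * ‖x n‖ ^ 2
  have hu0 : 0 ≤ u := by positivity
  have hu : 0 < 1 + u := by positivity
  have hlog : u / (1 + u) ≤ Real.log (1 + u) := by
    convert Real.one_sub_inv_le_log_of_pos hu using 1
    field_simp
    ring
  have hexp : 1 + u ≤ Real.exp (Pdef μ x) := by
    rw [← Real.exp_log hu, Real.exp_le_exp]
    exact hsum.le_tsum n fun m _ => Real.log_nonneg (le_add_of_nonneg_right (by positivity))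
  calc u = u / (1 + u) * (1 + u) := by field_simp
    _ ≤ Real.log (1 + u) * Real.exp (Pdef μ x) := by
        gcongr
        exact Real.log_nonneg (by linarith)

theorem norm_le_of_Pdef_le {μ c ε : ℝ} (hμ : 0 < μ) (hc : 0 ≤ c) (hε0 : 0 ≤ ε) (hε1 : ε ≤ 1)
    {x : l2} (hx : Pdef μ x ≤ c * ε ^ 2) : ‖x‖ ≤ √(c * Real.exp c / μ) * ε := by
  have hPc : Pdef μ x ≤ c := hx.trans (mul_le_of_le_one_right hc (pow_le_one₀ hε0 hε1))
  have hsq : μ * ‖x‖ ^ 2 ≤ μ * ((c * Real.exp c / μ) * ε ^ 2) := by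
    calc μ * ‖x‖ ^ 2 ≤ Pdef μ x * Real.exp (Pdef μ x) := mul_norm_sq_le_Pdef_mul_exp hμ.le x
      _ ≤ c * ε ^ 2 * Real.exp c := by gcongr
      _ = μ * ((c * Real.exp c / μ) * ε ^ 2) := by field_simp
  rw [← Real.sqrt_sq hε0, ← Real.sqrt_mul (by positivity), ← Real.sqrt_sq (norm_nonneg x)]
  exact Real.sqrt_le_sqrt (le_of_mul_le_mul_left hsq hμ)

theorem dist_le_gronwallBound_of_isDNLSSol_of_isALSol {γ μ a b A B : ℝ} (hγ : 0 ≤ γ)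
    (hμ : 0 ≤ μ) {φ φ' ψ ψ' : ℝ → l2} (hφ : IsDNLSSol γ (Icc a b) φ φ')
    (hψ : IsALSol μ (Icc a b) ψ ψ') (hA : ∀ s ∈ Icc a b, ‖φ s‖ ≤ A)
    (hB : ∀ s ∈ Icc a b, ‖ψ s‖ ≤ B) {t : ℝ} (ht : t ∈ Icc a b) :
    dist (φ t) (ψ t) ≤ gronwallBound (dist (φ a) (ψ a)) 2 (γ * A ^ 3 + 2 * μ * B ^ 3) (t - a) := by
  obtain ⟨hφd, -, hφe⟩ := hφ
  obtain ⟨hψd, -, hψe⟩ := hψ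
  have hsub : Ico a b ⊆ Icc a b := Ico_subset_Icc_self
  simpa using dist_le_of_approx_trajectories_ODE (v := fun _ x => I • l2.hopping x)
    (εf := γ * A ^ 3) (εg := 2 * μ * B ^ 3)
    (fun _ => l2.lipschitzWith_I_smul_hopping) (fun s hs => (hφd s hs).continuousWithinAt)
    (fun s hs => (hφd s (hsub hs)).mono_of_mem_nhdsWithin (Icc_mem_nhdsGE_of_mem hs))
    (fun s hs => by
      rw [dist_eq_norm]
      refine (l2.norm_sub_I_smul_hopping_le_of_dnls hγ (hφe s (hsub hs))).trans ?_
      gcongr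
      exact hA s (hsub hs))
    (fun s hs => (hψd s hs).continuousWithinAt)
    (fun s hs => (hψd s (hsub hs)).mono_of_mem_nhdsWithin (Icc_mem_nhdsGE_of_mem hs))
    (fun s hs => by
      rw [dist_eq_norm]
      refine (l2.norm_sub_I_smul_hopping_le_of_al hμ (hψe s (hsub hs))).trans ?_
      gcongr
      exact hB s (hsub hs))
    le_rfl t ht

theorem gronwallBound_le_mul_exp {δ K ε x : ℝ} (hK : 0 < K) (hε : 0 ≤ ε) :
    gronwallBound δ K ε x ≤ (δ + ε / K) * Real.exp (K * x) := by
  rw [gronwallBound_of_K_ne_0 hK.ne']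
  have : 0 ≤ ε / K := div_nonneg hε hK.le
  linarith

theorem closeness_linfty_general (γ μ C₀ Cγ₀ Cμ₀ Tf : ℝ) (hγ : 0 < γ) (hμ : 0 < μ)
    (hC₀ : 0 < C₀) (hCγ₀ : 0 < Cγ₀) (hCμ₀ : 0 < Cμ₀) :
    ∃ Ctil : ℝ, 0 < Ctil ∧
      ∀ ε : ℝ, 0 < ε → ε < 1 →
        ∀ φ φ' ψ ψ' : ℝ → l2,
          IsDNLSSol γ (Icc 0 Tf) φ φ' →
          IsALSol μ (Icc 0 Tf) ψ ψ' →
          ‖φ 0 - ψ 0‖ ≤ C₀ * ε ^ 3 →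
          ‖φ 0‖ ≤ Cγ₀ * ε →
          Pdef μ (ψ 0) ≤ Cμ₀ * ε ^ 2 →
          ∀ t ∈ Icc 0 Tf, (⨆ n : ℤ, ‖(φ t) n - (ψ t) n‖) ≤ Ctil * ε ^ 3 := by
  set Cψ := √(Cμ₀ * Real.exp Cμ₀ / μ)
  set K := γ * Cγ₀ ^ 3 + 2 * μ * Cψ ^ 3
  refine ⟨(C₀ + K / 2) * Real.exp (2 * Tf), by positivity, ?_⟩
  intro ε hε hε1 φ φ' ψ ψ' hφ hψ hδ hφ₀ hψ₀ t ht
  have hA (s : ℝ) (hs : s ∈ Icc 0 Tf) : ‖φ s‖ ≤ Cγ₀ * ε := (hφ.norm_eq hs).trans_le hφ₀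
  have hB (s : ℝ) (hs : s ∈ Icc 0 Tf) : ‖ψ s‖ ≤ Cψ * ε :=
    norm_le_of_Pdef_le hμ hCμ₀.le hε.le hε1.le ((hψ.Pdef_eq hμ.le hs).trans_le hψ₀)
  have hK : γ * (Cγ₀ * ε) ^ 3 + 2 * μ * (Cψ * ε) ^ 3 = K * ε ^ 3 := by ring
  calc (⨆ n : ℤ, ‖(φ t) n - (ψ t) n‖) ≤ dist (φ t) (ψ t) :=
        (lp.iSup_norm_apply_le_norm two_ne_zero (φ t - ψ t)).trans_eq (dist_eq_norm _ _).symm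
    _ ≤ gronwallBound (dist (φ 0) (ψ 0)) 2 (K * ε ^ 3) (t - 0) :=
        hK ▸ dist_le_gronwallBound_of_isDNLSSol_of_isALSol hγ.le hμ.le hφ hψ hA hB ht
    _ ≤ (dist (φ 0) (ψ 0) + K * ε ^ 3 / 2) * Real.exp (2 * (t - 0)) :=
        gronwallBound_le_mul_exp two_pos (by positivity)
    _ ≤ (C₀ * ε ^ 3 + K * ε ^ 3 / 2) * Real.exp (2 * Tf) := by
        rw [dist_eq_norm]
        gcongr
        linarith [ht.2]
    _ = (C₀ + K / 2) * Real.exp (2 * Tf) * ε ^ 3 := by ring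

/-- Closeness of solutions of the cubic DNLS and the AL lattice in the `ℓ∞` metric:
under the same smallness hypotheses on the initial data, the maximal distance between
individual units satisfies `sup_n |φₙ(t) − ψₙ(t)| ≤ C̃ε³` on `[0, T_f]`. -/
theorem closeness_linfty (γ μ C₀ Cγ₀ Cμ₀ Tf : ℝ) (hγ : 0 < γ) (hμ : 0 < μ)
    (hC₀ : 0 < C₀) (hCγ₀ : 0 < Cγ₀) (hCμ₀ : 0 < Cμ₀) (hTf : 0 < Tf) :
    ∃ Ctil : ℝ, 0 < Ctil ∧
      ∀ ε : ℝ, 0 < ε → ε < 1 →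
        ∀ φ φ' ψ ψ' : ℝ → l2,
          IsDNLSSol γ (Icc 0 Tf) φ φ' →
          IsALSol μ (Icc 0 Tf) ψ ψ' →
          ‖φ 0 - ψ 0‖ ≤ C₀ * ε ^ 3 →
          ‖φ 0‖ ≤ Cγ₀ * ε →
          Pdef μ (ψ 0) ≤ Cμ₀ * ε ^ 2 →
          ∀ t ∈ Icc 0 Tf, (⨆ n : ℤ, ‖(φ t) n - (ψ t) n‖) ≤ Ctil * ε ^ 3 :=
  closeness_linfty_general γ μ C₀ Cγ₀ Cμ₀ Tf hγ hμ hC₀ hCγ₀ hCμ₀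
end
end

section
/- Let γ > 0, μ > 0, let φ : [0, T] → ℓ² be a solution of the cubic DNLS equation and ψ : [0, T] → ℓ² a solution of the AL lattice, and set y(t) = φ(t) − ψ(t). Then for every t ∈ [0, T], the function t ↦ ‖y(t)‖_{ℓ²}² is differentiable and its derivative satisfies d/dt ‖y(t)‖_{ℓ²}² ≤ 2 ( 4μ ‖ψ(t)‖_{ℓ²}³ + 2γ ‖φ(t)‖_{ℓ²}³ ) ‖y(t)‖_{ℓ²}. -/
open Set

noncomputable section

/-! Both lattices have the form `ẏ = i (S y + N)` with `S` the neighbour sum, and `⟪y, S y⟫` is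
real because the shifts by `1` and `-1` are adjoint; hence the linear part drops out of
`d/dt ‖y‖² = 2 Re ⟪y, ẏ⟫`. The nonlinear parts are bounded by Cauchy–Schwarz and `|xₙ| ≤ ‖x‖`,
which gives `Re ⟪y, ẏ⟫ ≤ ‖y‖ (γ ‖φ‖³ + 2 μ ‖ψ‖³)`. -/

open scoped ENNReal InnerProductSpace ComplexConjugate

theorem Memℓp.comp_equiv {α β : Type*} {E : Type*} [NormedAddCommGroup E] {p : ℝ≥0∞}
    {f : α → E} (hf : Memℓp f p) (e : β ≃ α) : Memℓp (f ∘ e) p := by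
  obtain rfl | rfl | hp := p.trichotomy
  · rw [memℓp_zero_iff] at hf ⊢
    exact hf.preimage e.injective.injOn
  · rw [memℓp_infty_iff] at hf ⊢
    rwa [show (fun i => ‖(f ∘ e) i‖) = (fun i => ‖f i‖) ∘ e from rfl, e.surjective.range_comp]
  · rw [memℓp_gen_iff hp] at hf ⊢
    exact e.summable_iff.2 hf

section Shift

variable {E : Type*} [NormedAddCommGroup E] {p : ℝ≥0∞}

def lpShift (k : ℤ) (x : lp (fun _ : ℤ => E) p) : lp (fun _ : ℤ => E) p :=
  ⟨fun n => x (n + k), (lp.memℓp x).comp_equiv (Equiv.addRight k)⟩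

@[simp]
theorem lpShift_apply (k : ℤ) (x : lp (fun _ : ℤ => E) p) (n : ℤ) : lpShift k x n = x (n + k) :=
  rfl

theorem norm_lpShift (hp : 0 < p.toReal) (k : ℤ) (x : lp (fun _ : ℤ => E) p) :
    ‖lpShift k x‖ = ‖x‖ := by
  rw [lp.norm_eq_tsum_rpow hp, lp.norm_eq_tsum_rpow hp]
  congr 1
  exact (Equiv.addRight k).tsum_eq fun n => ‖x n‖ ^ p.toReal

theorem inner_lpShift_neg {𝕜 : Type*} [RCLike 𝕜] [InnerProductSpace 𝕜 E] (k : ℤ)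
    (x y : lp (fun _ : ℤ => E) 2) : ⟪x, lpShift (-k) y⟫_𝕜 = ⟪lpShift k x, y⟫_𝕜 := by
  rw [lp.inner_eq_tsum, lp.inner_eq_tsum, ← (Equiv.addRight k).tsum_eq]
  simp

end Shift

section WeightMul

variable {α 𝕜 : Type*} [RCLike 𝕜] {p : ℝ≥0∞}

def lpWeightMul (w : α → 𝕜) (C : ℝ) (hw : ∀ i, ‖w i‖ ≤ C) (x : lp (fun _ : α => 𝕜) p) :
    lp (fun _ : α => 𝕜) p :=
  ⟨fun i => w i * x i, ((lp.memℓp x).norm.const_mul C).mono fun i => by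
    rw [norm_mul]
    exact mul_le_mul_of_nonneg_right (hw i) (norm_nonneg _)⟩

@[simp]
theorem lpWeightMul_apply (w : α → 𝕜) (C : ℝ) (hw : ∀ i, ‖w i‖ ≤ C)
    (x : lp (fun _ : α => 𝕜) p) (i : α) : lpWeightMul w C hw x i = w i * x i :=
  rfl

theorem norm_lpWeightMul_le [Nonempty α] (hp : p ≠ 0) (w : α → 𝕜) (C : ℝ)
    (hw : ∀ i, ‖w i‖ ≤ C) (x : lp (fun _ : α => 𝕜) p) : ‖lpWeightMul w C hw x‖ ≤ C * ‖x‖ := by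
  have hC : 0 ≤ C := (norm_nonneg _).trans (hw (Classical.arbitrary α))
  calc ‖lpWeightMul w C hw x‖ ≤ ‖(C : 𝕜) • x‖ := lp.norm_mono hp fun i => by
        rw [lpWeightMul_apply, lp.coeFn_smul, Pi.smul_apply, norm_mul, norm_smul,
          RCLike.norm_ofReal, abs_of_nonneg hC]
        exact mul_le_mul_of_nonneg_right (hw i) (norm_nonneg _)
    _ = C * ‖x‖ := by rw [lp.norm_const_smul hp, RCLike.norm_ofReal, abs_of_nonneg hC]

end WeightMul

def neighbourSum (x : l2) : l2 := lpShift 1 x + lpShift (-1) x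

@[simp]
theorem neighbourSum_apply (x : l2) (n : ℤ) : neighbourSum x n = x (n + 1) + x (n - 1) := by
  simp [neighbourSum, sub_eq_add_neg]

theorem neighbourSum_sub (x y : l2) : neighbourSum (x - y) = neighbourSum x - neighbourSum y := by
  ext n
  simp only [neighbourSum_apply, lp.coeFn_sub, Pi.sub_apply]
  ring

theorem norm_neighbourSum_le (x : l2) : ‖neighbourSum x‖ ≤ 2 * ‖x‖ := by
  have hp : 0 < (2 : ℝ≥0∞).toReal := by norm_num
  calc ‖neighbourSum x‖ ≤ ‖lpShift 1 x‖ + ‖lpShift (-1) x‖ := norm_add_le _ _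
    _ = 2 * ‖x‖ := by rw [norm_lpShift hp, norm_lpShift hp]; ring

theorem re_inner_I_smul_neighbourSum (y : l2) : (⟪y, Complex.I • neighbourSum y⟫_ℂ).re = 0 := by
  have hself : ⟪y, lpShift (-1) y⟫_ℂ = conj ⟪y, lpShift 1 y⟫_ℂ := by
    rw [inner_lpShift_neg, inner_conj_symm]
  rw [neighbourSum, inner_smul_right, inner_add_right, hself, Complex.add_conj]
  simp

theorem norm_ofReal_mul_norm_sq_le (c : ℝ) (x : l2) (n : ℤ) :
    ‖((c * ‖x n‖ ^ 2 : ℝ) : ℂ)‖ ≤ |c| * ‖x‖ ^ 2 := by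
  rw [Complex.norm_real, norm_mul, norm_pow, norm_norm, Real.norm_eq_abs]
  gcongr
  exact lp.norm_apply_le_norm two_ne_zero x n

def dnlsNonlinearity (γ : ℝ) (x : l2) : l2 :=
  lpWeightMul (fun n => ((γ * ‖x n‖ ^ 2 : ℝ) : ℂ)) _ (norm_ofReal_mul_norm_sq_le γ x) x

def alNonlinearity (μ : ℝ) (x : l2) : l2 :=
  lpWeightMul (fun n => ((μ * ‖x n‖ ^ 2 : ℝ) : ℂ)) _ (norm_ofReal_mul_norm_sq_le μ x)
    (neighbourSum x)

theorem norm_dnlsNonlinearity_le (γ : ℝ) (x : l2) : ‖dnlsNonlinearity γ x‖ ≤ |γ| * ‖x‖ ^ 3 :=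
  (norm_lpWeightMul_le two_ne_zero _ _ _ x).trans_eq (by ring)

theorem norm_alNonlinearity_le (μ : ℝ) (x : l2) : ‖alNonlinearity μ x‖ ≤ 2 * |μ| * ‖x‖ ^ 3 :=
  calc ‖alNonlinearity μ x‖ ≤ |μ| * ‖x‖ ^ 2 * ‖neighbourSum x‖ :=
        norm_lpWeightMul_le two_ne_zero _ _ _ _
    _ ≤ |μ| * ‖x‖ ^ 2 * (2 * ‖x‖) := by gcongr; exact norm_neighbourSum_le x
    _ = 2 * |μ| * ‖x‖ ^ 3 := by ring

theorem IsDNLSSol.deriv_eq {γ : ℝ} {s : Set ℝ} {φ φ' : ℝ → l2} (h : IsDNLSSol γ s φ φ')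
    {t : ℝ} (ht : t ∈ s) :
    φ' t = Complex.I • (neighbourSum (φ t) + dnlsNonlinearity γ (φ t)) := by
  ext n
  have hn := h.2.2 t ht n
  simp only [lp.coeFn_smul, Pi.smul_apply, smul_eq_mul, lp.coeFn_add, Pi.add_apply,
    neighbourSum_apply, dnlsNonlinearity, lpWeightMul_apply]
  linear_combination (-Complex.I) * hn + (φ' t n) * Complex.I_mul_I

theorem IsALSol.deriv_eq {μ : ℝ} {s : Set ℝ} {ψ ψ' : ℝ → l2} (h : IsALSol μ s ψ ψ')
    {t : ℝ} (ht : t ∈ s) :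
    ψ' t = Complex.I • (neighbourSum (ψ t) + alNonlinearity μ (ψ t)) := by
  ext n
  have hn := h.2.2 t ht n
  simp only [lp.coeFn_smul, Pi.smul_apply, smul_eq_mul, lp.coeFn_add, Pi.add_apply,
    neighbourSum_apply, alNonlinearity, lpWeightMul_apply]
  linear_combination (-Complex.I) * hn + (ψ' t n) * Complex.I_mul_I

theorem lp.real_inner_eq_re_inner {ι : Type*} (x y : lp (fun _ : ι => ℂ) 2) :
    ⟪x, y⟫_ℝ = (⟪x, y⟫_ℂ).re :=
  (lp.hasSum_inner x y).unique (Complex.hasSum_re (lp.hasSum_inner x y))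

theorem re_inner_I_smul_neighbourSum_add_le (y r : l2) :
    (⟪y, Complex.I • (neighbourSum y + r)⟫_ℂ).re ≤ ‖y‖ * ‖r‖ := by
  rw [smul_add, inner_add_right, Complex.add_re, re_inner_I_smul_neighbourSum, zero_add]
  calc (⟪y, Complex.I • r⟫_ℂ).re ≤ ‖⟪y, Complex.I • r⟫_ℂ‖ := Complex.re_le_norm _
    _ ≤ ‖y‖ * ‖Complex.I • r‖ := norm_inner_le_norm _ _
    _ = ‖y‖ * ‖r‖ := by rw [norm_smul, Complex.norm_I, one_mul]

/-- For a DNLS solution `φ` and an AL solution `ψ` on `[0, T]`, with `y = φ − ψ`, the map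
`t ↦ ‖y(t)‖²` is differentiable and its derivative satisfies
`d/dt ‖y(t)‖² ≤ 2(4μ‖ψ(t)‖³ + 2γ‖φ(t)‖³)‖y(t)‖`. -/
theorem deriv_sq_dist_bound (γ μ T : ℝ) (hγ : 0 < γ) (hμ : 0 < μ) (hT : 0 < T)
    (φ φ' ψ ψ' : ℝ → l2)
    (hφ : IsDNLSSol γ (Icc 0 T) φ φ') (hψ : IsALSol μ (Icc 0 T) ψ ψ') :
    ∀ t ∈ Icc (0 : ℝ) T,
      DifferentiableWithinAt ℝ (fun s => ‖φ s - ψ s‖ ^ 2) (Icc 0 T) t ∧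
      derivWithin (fun s => ‖φ s - ψ s‖ ^ 2) (Icc 0 T) t ≤
        2 * (4 * μ * ‖ψ t‖ ^ 3 + 2 * γ * ‖φ t‖ ^ 3) * ‖φ t - ψ t‖ := by
  intro t ht
  have hy : HasDerivWithinAt (fun s => ‖φ s - ψ s‖ ^ 2)
      (2 * ⟪φ t - ψ t, φ' t - ψ' t⟫_ℝ) (Icc 0 T) t :=
    ((hφ.1 t ht).sub (hψ.1 t ht)).norm_sq
  refine ⟨hy.differentiableWithinAt, ?_⟩
  set r := dnlsNonlinearity γ (φ t) - alNonlinearity μ (ψ t)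
  have hy' : φ' t - ψ' t = Complex.I • (neighbourSum (φ t - ψ t) + r) := by
    rw [hφ.deriv_eq ht, hψ.deriv_eq ht, neighbourSum_sub]
    module
  have hr : ‖r‖ ≤ γ * ‖φ t‖ ^ 3 + 2 * μ * ‖ψ t‖ ^ 3 := by
    have hsum := add_le_add (norm_dnlsNonlinearity_le γ (φ t)) (norm_alNonlinearity_le μ (ψ t))
    rw [abs_of_pos hγ, abs_of_pos hμ] at hsum
    exact (norm_sub_le _ _).trans hsum
  rw [hy.derivWithin (uniqueDiffOn_Icc hT t ht), lp.real_inner_eq_re_inner, hy']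
  have hre := (re_inner_I_smul_neighbourSum_add_le (φ t - ψ t) r).trans
    (mul_le_mul_of_nonneg_left hr (norm_nonneg _))
  have hnonneg : 0 ≤ ‖φ t - ψ t‖ * (γ * ‖φ t‖ ^ 3 + 2 * μ * ‖ψ t‖ ^ 3) := by positivity
  linarith
end
end
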